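/- The operator norm of the weighted discrete least-squares projection satisfies ‖Q̂‖ ≤ ‖I_p‖ · (1 + (Σ_{k=1}^q w_k)^{1/2} / min_{j=0,…,p} √(w̃_j) · sup_{‖ψ‖_∞ = 1} E_p(ψ)); equivalently, for every continuous φ with ‖φ‖_∞ = 1, ‖Q̂φ‖_∞ ≤ ‖I_p‖ (1 + (Σ_k w_k)^{1/2} / min_j √(w̃_j) · sup_{‖ψ‖_∞=1} E_p(ψ)). -/

import Mathlib

/-- The uniform norm on `[−1, 1]`. -/
noncomputable def unifNorm (φ : ℝ → ℝ) : ℝ :=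
  sSup ((fun t => |φ t|) '' Set.Icc (-1 : ℝ) 1)

/-- `E_p(φ) = inf_{Q ∈ 𝒫^p} ‖φ − Q‖_∞`, the best uniform approximation error by
polynomials of degree `≤ p`. -/
noncomputable def Ep (p : ℕ) (φ : ℝ → ℝ) : ℝ :=
  sInf {e : ℝ | ∃ Q : Polynomial ℝ, Q.degree ≤ (p : ℕ) ∧
    e = unifNorm fun t => φ t - Q.eval t}

/-- The operator norm, induced by the uniform norm on `[−1, 1]`, of an operator
sending continuous functions to polynomials. -/
noncomputable def opNorm (T : (ℝ → ℝ) → Polynomial ℝ) : ℝ :=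
  sSup {a : ℝ | ∃ φ : ℝ → ℝ, ContinuousOn φ (Set.Icc (-1 : ℝ) 1) ∧
    unifNorm φ = 1 ∧ a = unifNorm fun t => (T φ).eval t}

/-- `sup_{‖ψ‖_∞ = 1} E_p(ψ)` over continuous `ψ`. -/
noncomputable def supEp (p : ℕ) : ℝ :=
  sSup {a : ℝ | ∃ ψ : ℝ → ℝ, ContinuousOn ψ (Set.Icc (-1 : ℝ) 1) ∧
    unifNorm ψ = 1 ∧ a = Ep p ψ}

/-! The least-squares polynomial `P = Q̂φ` is within `C · ‖φ − Q‖_∞` of `φ` at every interpolation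
node, for every competitor `Q` of degree `≤ p`, where `C = (Σ_k w_k)^{1/2} / min_j √(w̃_j)`: compare
the weighted sums of squares of `φ − P` and `φ − Q`. Clamping `P` to `[−M, M]`, with
`M = 1 + C‖φ − Q‖_∞`, gives a continuous function of norm `≤ M` whose interpolant is `P` itself,
so `‖P‖_∞ ≤ ‖I_p‖ M`. Taking the infimum over `Q` yields the bound with `E_p(φ) ≤ sup E_p`. -/

open Polynomial Finset
open scoped Pointwise

lemma unifNorm_nonneg (f : ℝ → ℝ) : 0 ≤ unifNorm f :=
  Real.sSup_nonneg (by rintro x ⟨t, -, rfl⟩; positivity)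

lemma abs_le_unifNorm {f : ℝ → ℝ} (hf : ContinuousOn f (Set.Icc (-1 : ℝ) 1)) {t : ℝ}
    (ht : t ∈ Set.Icc (-1 : ℝ) 1) : |f t| ≤ unifNorm f :=
  le_csSup (isCompact_Icc.bddAbove_image hf.abs) ⟨t, ht, rfl⟩

lemma unifNorm_le {f : ℝ → ℝ} {M : ℝ} (hM : 0 ≤ M)
    (h : ∀ t ∈ Set.Icc (-1 : ℝ) 1, |f t| ≤ M) : unifNorm f ≤ M :=
  Real.sSup_le (by rintro x ⟨t, ht, rfl⟩; exact h t ht) hM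

lemma unifNorm_const_mul {c : ℝ} (hc : 0 ≤ c) (g : ℝ → ℝ) :
    unifNorm (fun t => c * g t) = c * unifNorm g := by
  have himage : (fun t => |c * g t|) '' Set.Icc (-1 : ℝ) 1 =
      c • (fun t => |g t|) '' Set.Icc (-1 : ℝ) 1 := by
    rw [← Set.image_smul, Set.image_image]
    simp only [abs_mul, abs_of_nonneg hc, smul_eq_mul]
  rw [unifNorm, himage, Real.sSup_smul_of_nonneg hc]
  rfl

lemma opNorm_nonneg (T : (ℝ → ℝ) → ℝ[X]) : 0 ≤ opNorm T :=
  Real.sSup_nonneg (by rintro _ ⟨ψ, -, -, rfl⟩; exact unifNorm_nonneg _)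

lemma Ep_le_unifNorm (p : ℕ) (φ : ℝ → ℝ) : Ep p φ ≤ unifNorm φ :=
  csInf_le ⟨0, by rintro _ ⟨Q, -, rfl⟩; exact unifNorm_nonneg _⟩ ⟨0, by simp, by simp⟩

lemma Ep_le_supEp (p : ℕ) {φ : ℝ → ℝ} (hφ : ContinuousOn φ (Set.Icc (-1 : ℝ) 1))
    (hφ1 : unifNorm φ = 1) : Ep p φ ≤ supEp p :=
  le_csSup ⟨1, by rintro _ ⟨ψ, -, hψ1, rfl⟩; exact hψ1 ▸ Ep_le_unifNorm p ψ⟩ ⟨φ, hφ, hφ1, rfl⟩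

lemma le_add_mul_Ep {p : ℕ} {φ : ℝ → ℝ} {a A B : ℝ} (hB : 0 ≤ B)
    (h : ∀ Q : ℝ[X], Q.degree ≤ p → a ≤ A + B * unifNorm fun t => φ t - Q.eval t) :
    a ≤ A + B * Ep p φ := by
  rcases hB.eq_or_lt with rfl | hB
  · simpa using h 0 (by simp)
  · have hinf : (a - A) / B ≤ Ep p φ :=
      le_csInf ⟨_, 0, by simp, rfl⟩ fun _ ⟨Q, hQ, he⟩ => by
        rw [he, div_le_iff₀' hB]
        linarith [h Q hQ]
    rw [div_le_iff₀' hB] at hinf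
    linarith

lemma sqrt_mul_abs_le_of_weighted_sum_sq_le {κ : Type*} [Fintype κ] {w e f : κ → ℝ}
    (hw : ∀ k, 0 ≤ w k) {b : ℝ} (hb : 0 ≤ b) (hf : ∀ k, |f k| ≤ b)
    (hef : ∑ k, w k * e k ^ 2 ≤ ∑ k, w k * f k ^ 2) (k : κ) :
    √(w k) * |e k| ≤ √(∑ k, w k) * b := by
  have hsq : w k * e k ^ 2 ≤ (∑ k, w k) * b ^ 2 :=
    calc w k * e k ^ 2 ≤ ∑ k, w k * e k ^ 2 :=
          single_le_sum (fun i _ => mul_nonneg (hw i) (sq_nonneg _)) (mem_univ k)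
      _ ≤ ∑ k, w k * f k ^ 2 := hef
      _ ≤ ∑ k, w k * b ^ 2 := sum_le_sum fun i _ =>
          mul_le_mul_of_nonneg_left (sq_le_sq' (abs_le.1 (hf i)).1 (abs_le.1 (hf i)).2) (hw i)
      _ = (∑ k, w k) * b ^ 2 := (sum_mul _ _ _).symm
  calc √(w k) * |e k| = √(w k * e k ^ 2) := by rw [Real.sqrt_mul (hw k), Real.sqrt_sq_eq_abs]
    _ ≤ √((∑ k, w k) * b ^ 2) := Real.sqrt_le_sqrt hsq
    _ = √(∑ k, w k) * b := by rw [Real.sqrt_mul (sum_nonneg fun i _ => hw i), Real.sqrt_sq hb]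

lemma degree_lt_card_univ_fin {p : ℕ} {P : ℝ[X]} (hP : P.degree ≤ p) :
    P.degree < #(univ : Finset (Fin (p + 1))) := by
  rw [card_univ, Fintype.card_fin]
  exact hP.trans_lt (WithBot.coe_lt_coe.2 p.lt_succ_self)

def IsInterpolationOperator (p : ℕ) (v : Fin (p + 1) → ℝ) (I : (ℝ → ℝ) → ℝ[X]) : Prop :=
  ∀ φ : ℝ → ℝ, ContinuousOn φ (Set.Icc (-1 : ℝ) 1) →
    (I φ).degree ≤ p ∧ ∀ j, (I φ).eval (v j) = φ (v j)

namespace IsInterpolationOperator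

variable {p : ℕ} {v : Fin (p + 1) → ℝ} {I : (ℝ → ℝ) → ℝ[X]}
  (hI : IsInterpolationOperator p v I) (hv : Function.Injective v)
include hI hv

lemma eq_interpolate {ψ : ℝ → ℝ} (hψ : ContinuousOn ψ (Set.Icc (-1 : ℝ) 1)) :
    I ψ = Lagrange.interpolate univ v fun j => ψ (v j) :=
  Lagrange.eq_interpolate_of_eval_eq _ hv.injOn (degree_lt_card_univ_fin (hI ψ hψ).1)
    fun j _ => (hI ψ hψ).2 j

lemma unifNorm_eval_le_lebesgue_mul (hvmem : ∀ j, v j ∈ Set.Icc (-1 : ℝ) 1) {ψ : ℝ → ℝ}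
    (hψ : ContinuousOn ψ (Set.Icc (-1 : ℝ) 1)) :
    unifNorm (fun t => (I ψ).eval t) ≤
      (∑ j, unifNorm fun t => (Lagrange.basis univ v j).eval t) * unifNorm ψ := by
  rw [hI.eq_interpolate hv hψ]
  refine unifNorm_le (mul_nonneg (sum_nonneg fun j _ => unifNorm_nonneg _) (unifNorm_nonneg ψ))
    fun t ht => ?_
  rw [Lagrange.interpolate_apply, eval_finsetSum, sum_mul]
  refine (abs_sum_le_sum_abs _ _).trans (sum_le_sum fun j _ => ?_)
  rw [eval_mul, eval_C, abs_mul, mul_comm]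
  exact mul_le_mul (abs_le_unifNorm (Polynomial.continuous _).continuousOn ht)
    (abs_le_unifNorm hψ (hvmem j)) (abs_nonneg _) (unifNorm_nonneg _)

lemma le_opNorm (hvmem : ∀ j, v j ∈ Set.Icc (-1 : ℝ) 1) {ψ : ℝ → ℝ}
    (hψ : ContinuousOn ψ (Set.Icc (-1 : ℝ) 1)) (hψ1 : unifNorm ψ = 1) :
    unifNorm (fun t => (I ψ).eval t) ≤ opNorm I := by
  refine le_csSup ⟨∑ j, unifNorm fun t => (Lagrange.basis univ v j).eval t, ?_⟩
    ⟨ψ, hψ, hψ1, rfl⟩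
  rintro _ ⟨ψ', hψ', hψ'1, rfl⟩
  simpa [hψ'1] using hI.unifNorm_eval_le_lebesgue_mul hv hvmem hψ'

lemma unifNorm_eval_le_opNorm_mul (hvmem : ∀ j, v j ∈ Set.Icc (-1 : ℝ) 1) {ψ : ℝ → ℝ}
    (hψ : ContinuousOn ψ (Set.Icc (-1 : ℝ) 1)) :
    unifNorm (fun t => (I ψ).eval t) ≤ opNorm I * unifNorm ψ := by
  rcases (unifNorm_nonneg ψ).eq_or_lt with hc | hc
  · simpa [← hc] using hI.unifNorm_eval_le_lebesgue_mul hv hvmem hψ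
  set c := unifNorm ψ
  set ψ' : ℝ → ℝ := fun t => c⁻¹ * ψ t
  have hψ' : ContinuousOn ψ' (Set.Icc (-1 : ℝ) 1) := continuousOn_const.mul hψ
  have hψ'1 : unifNorm ψ' = 1 := by
    rw [unifNorm_const_mul (inv_nonneg.2 hc.le), inv_mul_cancel₀ hc.ne']
  have hscale : I ψ = c • I ψ' := by
    rw [hI.eq_interpolate hv hψ, hI.eq_interpolate hv hψ', ← map_smul]
    congr 1
    funext j
    simp [ψ', hc.ne']
  calc unifNorm (fun t => (I ψ).eval t) = c * unifNorm (fun t => (I ψ').eval t) := by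
        simp only [hscale, eval_smul, smul_eq_mul, unifNorm_const_mul hc.le]
    _ ≤ c * opNorm I := mul_le_mul_of_nonneg_left (hI.le_opNorm hv hvmem hψ' hψ'1) hc.le
    _ = opNorm I * c := mul_comm _ _

lemma unifNorm_eval_le_opNorm_mul_of_abs_eval_le (hvmem : ∀ j, v j ∈ Set.Icc (-1 : ℝ) 1)
    {P : ℝ[X]} (hP : P.degree ≤ p) {M : ℝ} (hM : ∀ j, |P.eval (v j)| ≤ M) :
    unifNorm (fun t => P.eval t) ≤ opNorm I * M := by
  have hM0 : 0 ≤ M := (abs_nonneg _).trans (hM 0)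
  set ψ : ℝ → ℝ := fun t => max (-M) (min M (P.eval t))
  have hψ : ContinuousOn ψ (Set.Icc (-1 : ℝ) 1) :=
    (continuous_const.max (continuous_const.min P.continuous)).continuousOn
  have hIψ : I ψ = P := by
    rw [hI.eq_interpolate hv hψ, Lagrange.eq_interpolate hv.injOn (degree_lt_card_univ_fin hP)]
    congr 1
    funext j
    simp [ψ, (abs_le.1 (hM j)).1, (abs_le.1 (hM j)).2]
  have hψM : unifNorm ψ ≤ M := unifNorm_le hM0 fun t _ =>
    abs_le.2 ⟨le_max_left _ _, max_le (neg_le_self hM0) (min_le_left _ _)⟩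
  calc unifNorm (fun t => P.eval t) = unifNorm (fun t => (I ψ).eval t) := by rw [hIψ]
    _ ≤ opNorm I * unifNorm ψ := hI.unifNorm_eval_le_opNorm_mul hv hvmem hψ
    _ ≤ opNorm I * M := mul_le_mul_of_nonneg_left hψM (opNorm_nonneg I)

end IsInterpolationOperator

theorem weighted_least_squares_opNorm_bound_general
    (p q : ℕ)
    (z : Fin q → ℝ) (hzinj : Function.Injective z)
    (hzmem : ∀ k, z k ∈ Set.Icc (-1 : ℝ) 1)
    (w : Fin q → ℝ) (hw : ∀ k, 0 < w k)
    -- `Q̂` is the weighted least-squares projection onto `𝒫^p`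
    (Qhat : (ℝ → ℝ) → Polynomial ℝ)
    (hQhat : ∀ φ : ℝ → ℝ, ContinuousOn φ (Set.Icc (-1 : ℝ) 1) →
      (Qhat φ).degree ≤ (p : ℕ) ∧ ∀ Q : Polynomial ℝ, Q.degree ≤ (p : ℕ) →
        ∑ k : Fin q, w k * (φ (z k) - (Qhat φ).eval (z k)) ^ 2 ≤
          ∑ k : Fin q, w k * (φ (z k) - Q.eval (z k)) ^ 2)
    -- `I` is the Lagrange interpolation operator at the subset `z ∘ ι` of the
    -- nodes, with attached weights `w ∘ ι`
    (ι : Fin (p + 1) → Fin q) (hι : Function.Injective ι)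
    (I : (ℝ → ℝ) → Polynomial ℝ)
    (hI : ∀ φ : ℝ → ℝ, ContinuousOn φ (Set.Icc (-1 : ℝ) 1) →
      (I φ).degree ≤ (p : ℕ) ∧ ∀ j : Fin (p + 1), (I φ).eval (z (ι j)) = φ (z (ι j)))
    (φ : ℝ → ℝ) (hφ : ContinuousOn φ (Set.Icc (-1 : ℝ) 1))
    (hφ1 : unifNorm φ = 1) :
    unifNorm (fun t => (Qhat φ).eval t) ≤
      opNorm I *
        (1 + Real.sqrt (∑ k : Fin q, w k) / (⨅ j : Fin (p + 1), Real.sqrt (w (ι j))) *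
          supEp p) := by
  set v : Fin (p + 1) → ℝ := fun j => z (ι j)
  have hv : Function.Injective v := hzinj.comp hι
  have hvmem : ∀ j, v j ∈ Set.Icc (-1 : ℝ) 1 := fun j => hzmem (ι j)
  obtain ⟨hPdeg, hPmin⟩ := hQhat φ hφ
  have hm : 0 < ⨅ j, √(w (ι j)) := by
    obtain ⟨j, hj⟩ := exists_eq_ciInf_of_finite (f := fun j => √(w (ι j)))
    rw [← hj]
    exact Real.sqrt_pos.2 (hw (ι j))
  set m := ⨅ j, √(w (ι j))
  set C := √(∑ k, w k) / m with hC
  have hC0 : 0 ≤ opNorm I * C := mul_nonneg (opNorm_nonneg I) (by positivity)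
  have hnode : ∀ Q : ℝ[X], Q.degree ≤ p →
      ∀ j, |(Qhat φ).eval (v j)| ≤ 1 + C * unifNorm fun t => φ t - Q.eval t := by
    intro Q hQ j
    set b := unifNorm fun t => φ t - Q.eval t
    have herr : √(w (ι j)) * |φ (v j) - (Qhat φ).eval (v j)| ≤ √(∑ k, w k) * b :=
      sqrt_mul_abs_le_of_weighted_sum_sq_le (fun k => (hw k).le) (unifNorm_nonneg _)
        (fun k => abs_le_unifNorm (hφ.sub Q.continuous.continuousOn) (hzmem k)) (hPmin Q hQ) (ι j)
    have hmerr : |φ (v j) - (Qhat φ).eval (v j)| ≤ C * b := by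
      rw [hC, div_mul_eq_mul_div, le_div_iff₀' hm]
      exact (mul_le_mul_of_nonneg_right (ciInf_le (Finite.bddBelow_range _) j)
        (abs_nonneg _)).trans herr
    have hφv : |φ (v j)| ≤ 1 := hφ1 ▸ abs_le_unifNorm hφ (hvmem j)
    linarith [abs_sub_abs_le_abs_sub ((Qhat φ).eval (v j)) (φ (v j)),
      abs_sub_comm ((Qhat φ).eval (v j)) (φ (v j))]
  have hIv : IsInterpolationOperator p v I := hI
  calc unifNorm (fun t => (Qhat φ).eval t) ≤ opNorm I + opNorm I * C * Ep p φ :=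
        le_add_mul_Ep hC0 fun Q hQ =>
          (hIv.unifNorm_eval_le_opNorm_mul_of_abs_eval_le hv hvmem hPdeg (hnode Q hQ)).trans_eq
            (by ring)
    _ ≤ opNorm I + opNorm I * C * supEp p := by gcongr; exact Ep_le_supEp p hφ hφ1
    _ = opNorm I * (1 + C * supEp p) := by ring

/-- the weighted discrete least-squares projection `Q̂` satisfies,
for every continuous `φ` with `‖φ‖_∞ = 1`,
`‖Q̂φ‖_∞ ≤ ‖I_p‖ (1 + (Σ_k w_k)^{1/2} / min_j √(w̃_j) · sup_{‖ψ‖_∞=1} E_p(ψ))`. -/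
theorem weighted_least_squares_opNorm_bound
    (p q : ℕ) (hpq : p + 1 ≤ q)
    (z : Fin q → ℝ) (hzinj : Function.Injective z)
    (hzmem : ∀ k, z k ∈ Set.Icc (-1 : ℝ) 1)
    (w : Fin q → ℝ) (hw : ∀ k, 0 < w k)
    -- `Q̂` is the weighted least-squares projection onto `𝒫^p`
    (Qhat : (ℝ → ℝ) → Polynomial ℝ)
    (hQhat : ∀ φ : ℝ → ℝ, ContinuousOn φ (Set.Icc (-1 : ℝ) 1) →
      (Qhat φ).degree ≤ (p : ℕ) ∧ ∀ Q : Polynomial ℝ, Q.degree ≤ (p : ℕ) →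
        ∑ k : Fin q, w k * (φ (z k) - (Qhat φ).eval (z k)) ^ 2 ≤
          ∑ k : Fin q, w k * (φ (z k) - Q.eval (z k)) ^ 2)
    -- `I` is the Lagrange interpolation operator at the subset `z ∘ ι` of the
    -- nodes, with attached weights `w ∘ ι`
    (ι : Fin (p + 1) → Fin q) (hι : Function.Injective ι)
    (I : (ℝ → ℝ) → Polynomial ℝ)
    (hI : ∀ φ : ℝ → ℝ, ContinuousOn φ (Set.Icc (-1 : ℝ) 1) →
      (I φ).degree ≤ (p : ℕ) ∧ ∀ j : Fin (p + 1), (I φ).eval (z (ι j)) = φ (z (ι j)))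
    (φ : ℝ → ℝ) (hφ : ContinuousOn φ (Set.Icc (-1 : ℝ) 1))
    (hφ1 : unifNorm φ = 1) :
    unifNorm (fun t => (Qhat φ).eval t) ≤
      opNorm I *
        (1 + Real.sqrt (∑ k : Fin q, w k) / (⨅ j : Fin (p + 1), Real.sqrt (w (ι j))) *
          supEp p) :=
  weighted_least_squares_opNorm_bound_general p q z hzinj hzmem w hw Qhat hQhat ι hι I hI φ hφ hφ1
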